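/- Let P ⊆ ℝⁿ be a finite set of distinct generators and K : ℝⁿ × ℝⁿ → ℝ≥0 a kernel with K(p,·) integrable for every p and vol_p(C(p)) = ∫_{C(p)} K(p,y) dy strictly positive for every p ∈ P. Then the CVDE f is a probability density: ∫_{ℝⁿ} f(x) dx = 1. Moreover, under the measure f dx each Voronoi cell has mass exactly 1/|P|: ∫_{C(p)} f(x) dx = 1/|P| for every p ∈ P. -/

import Mathlib

open MeasureTheory Metric Set

noncomputable section

/-- The Voronoi cell of a generator `p` w.r.t. the finite set of generators `P`. -/
def cell {n : ℕ} (P : Finset (EuclideanSpace ℝ (Fin n))) (p : EuclideanSpace ℝ (Fin n)) :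
    Set (EuclideanSpace ℝ (Fin n)) :=
  {x | ∀ q ∈ P, dist x p ≤ dist x q}

/-- A choice of a nearest generator (the generator of the cell containing `x`;
uniquely determined off the cell boundaries). -/
noncomputable def nearest {n : ℕ} (P : Finset (EuclideanSpace ℝ (Fin n)))
    (x : EuclideanSpace ℝ (Fin n)) : EuclideanSpace ℝ (Fin n) :=
  if h : P.Nonempty then (P.exists_min_image (fun p => dist x p) h).choose else 0

/-- The Compactified Voronoi Density Estimator:
`f(x) = K(p,x) / (|P| · vol_p(C(x)))` where `p` is the generator of `C(x)`. -/
noncomputable def cvde {n : ℕ} (P : Finset (EuclideanSpace ℝ (Fin n)))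
    (K : EuclideanSpace ℝ (Fin n) → EuclideanSpace ℝ (Fin n) → ℝ)
    (x : EuclideanSpace ℝ (Fin n)) : ℝ :=
  K (nearest P x) x / (P.card * ∫ y in cell P (nearest P x), K (nearest P x) y)

/-!
Two distinct generators are equidistant from `x` only on their perpendicular bisector, a
Lebesgue-null hyperplane. Hence almost every point lies in exactly one Voronoi cell, whose
generator is its nearest one, so on `C(p)` the CVDE agrees a.e. with `K(p,·) / (|P| vol_p(C(p)))`
and integrates to `1 / |P|` there. The cells cover `ℝⁿ` and overlap only in null sets, so the
total integral is `|P| · 1 / |P| = 1`.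
-/

section Bisector

variable {V : Type*} [NormedAddCommGroup V] [InnerProductSpace ℝ V] [FiniteDimensional ℝ V]
  [MeasurableSpace V] [BorelSpace V] (μ : Measure V) [μ.IsAddHaarMeasure]

theorem ae_dist_ne_dist {p q : V} (hpq : p ≠ q) : ∀ᵐ x ∂μ, dist x p ≠ dist x q := by
  refine measure_mono_null (fun x hx => ?_)
    (Measure.addHaar_affineSubspace μ (AffineSubspace.perpBisector p q) (by simpa using hpq))
  exact AffineSubspace.mem_perpBisector_iff_dist_eq.2 (not_not.1 hx)

theorem ae_forall_dist_ne_dist (P : Finset V) :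
    ∀ᵐ x ∂μ, ∀ p ∈ P, ∀ q ∈ P, p ≠ q → dist x p ≠ dist x q := by
  simp only [Finset.eventually_all]
  intro p _ q _
  by_cases hpq : p = q
  · simp [hpq]
  · exact (ae_dist_ne_dist μ hpq).mono fun x hx _ => hx

end Bisector

theorem integral_eq_sum_setIntegral_of_iUnion_eq_univ {X F ι : Type*} [MeasurableSpace X]
    {μ : Measure X} [NormedAddCommGroup F] [NormedSpace ℝ F] {f : X → F} (t : Finset ι)
    {s : ι → Set X} (hs : ∀ i ∈ t, NullMeasurableSet (s i) μ)
    (hd : (t : Set ι).Pairwise (Function.onFun (AEDisjoint μ) s))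
    (hcover : ⋃ i ∈ t, s i = univ)
    (hf : ∀ i ∈ t, IntegrableOn f (s i) μ) :
    ∫ x, f x ∂μ = ∑ i ∈ t, ∫ x in s i, f x ∂μ := by
  have hcover' : ⋃ i : t, s i = univ := by rw [← hcover, iUnion_subtype]
  have hf' : IntegrableOn f (⋃ i : t, s i) μ := by
    rw [hcover', ← hcover]; exact integrableOn_finset_iUnion.2 hf
  rw [← setIntegral_univ, ← hcover',
    integral_iUnion_ae (s := fun i : t => s i) (fun i => hs i i.2)
      (fun i j hij => hd i.2 j.2 (Subtype.coe_ne_coe.2 hij)) hf', tsum_fintype,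
    Finset.sum_coe_sort t fun i => ∫ x in s i, f x ∂μ]

section Voronoi

variable {n : ℕ} {P : Finset (EuclideanSpace ℝ (Fin n))}

local notation "E" => EuclideanSpace ℝ (Fin n)

theorem isClosed_cell (p : E) : IsClosed (cell P p) := by
  simp only [cell, ofPred_forall]
  exact isClosed_biInter fun q _ =>
    isClosed_le (continuous_id.dist continuous_const) (continuous_id.dist continuous_const)

theorem nearest_mem (hP : P.Nonempty) (x : E) : nearest P x ∈ P := by
  rw [nearest, dif_pos hP]
  exact (P.exists_min_image (fun p => dist x p) hP).choose_spec.1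

theorem mem_cell_nearest (hP : P.Nonempty) (x : E) : x ∈ cell P (nearest P x) := by
  rw [nearest, dif_pos hP]
  exact (P.exists_min_image (fun p => dist x p) hP).choose_spec.2

theorem iUnion_cell (hP : P.Nonempty) : ⋃ p ∈ P, cell P p = univ :=
  eq_univ_of_forall fun x => mem_biUnion (nearest_mem hP x) (mem_cell_nearest hP x)

theorem ae_eq_of_mem_cell_of_mem_cell (P : Finset E) :
    ∀ᵐ x, ∀ p ∈ P, ∀ q ∈ P, x ∈ cell P p → x ∈ cell P q → p = q := by
  filter_upwards [ae_forall_dist_ne_dist volume P] with x hx p hp q hq hxp hxq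
  by_contra hpq
  exact hx p hp q hq hpq (le_antisymm (hxp q hq) (hxq p hp))

theorem aedisjoint_cell {p q : E} (hp : p ∈ P) (hq : q ∈ P) (hpq : p ≠ q) :
    AEDisjoint volume (cell P p) (cell P q) := by
  refine measure_eq_zero_iff_ae_notMem.2 ?_
  filter_upwards [ae_eq_of_mem_cell_of_mem_cell P] with x hx hxpq
  exact hpq (hx p hp q hq hxpq.1 hxpq.2)

theorem ae_nearest_eq_of_mem_cell {p : E} (hp : p ∈ P) :
    ∀ᵐ x, x ∈ cell P p → nearest P x = p := by
  filter_upwards [ae_eq_of_mem_cell_of_mem_cell P] with x hx hxp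
  exact hx _ (nearest_mem ⟨p, hp⟩ x) p hp (mem_cell_nearest ⟨p, hp⟩ x) hxp

theorem ae_cvde_eq_of_mem_cell (K : E → E → ℝ) {p : E} (hp : p ∈ P) :
    ∀ᵐ x, x ∈ cell P p → cvde P K x = K p x / (P.card * ∫ y in cell P p, K p y) := by
  filter_upwards [ae_nearest_eq_of_mem_cell hp] with x hx hxp
  rw [cvde, hx hxp]

theorem integrableOn_cvde_cell {K : E → E → ℝ} {p : E} (hp : p ∈ P)
    (hK : IntegrableOn (K p) (cell P p)) : IntegrableOn (cvde P K) (cell P p) :=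
  Integrable.congr (hK.div_const _) <| ((ae_restrict_iff' (isClosed_cell p).measurableSet).2
    (ae_cvde_eq_of_mem_cell K hp)).mono fun _ hx => hx.symm

theorem setIntegral_cvde_cell {K : E → E → ℝ} {p : E} (hp : p ∈ P)
    (hvol : (∫ y in cell P p, K p y) ≠ 0) : ∫ x in cell P p, cvde P K x = 1 / P.card := by
  have hcard : (P.card : ℝ) ≠ 0 := by exact_mod_cast (Finset.card_pos.2 ⟨p, hp⟩).ne'
  rw [setIntegral_congr_ae (isClosed_cell p).measurableSet (ae_cvde_eq_of_mem_cell K hp),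
    integral_div]
  field_simp

end Voronoi

theorem cvde_integral_one_and_cells_equally_likely_general {n : ℕ}
    (P : Finset (EuclideanSpace ℝ (Fin n))) (hP : P.Nonempty)
    (K : EuclideanSpace ℝ (Fin n) → EuclideanSpace ℝ (Fin n) → ℝ)
    (hKint : ∀ p, Integrable (K p) volume)
    (hvolpos : ∀ p ∈ P, 0 < ∫ y in cell P p, K p y) :
    (∫ x, cvde P K x = 1) ∧
    ∀ p ∈ P, (∫ x in cell P p, cvde P K x) = 1 / P.card := by
  have hcell p (hp : p ∈ P) : ∫ x in cell P p, cvde P K x = 1 / P.card :=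
    setIntegral_cvde_cell hp (hvolpos p hp).ne'
  refine ⟨?_, hcell⟩
  rw [integral_eq_sum_setIntegral_of_iUnion_eq_univ P
      (fun p _ => (isClosed_cell p).nullMeasurableSet)
      (fun p hp q hq => aedisjoint_cell hp hq) (iUnion_cell hP)
      (fun p hp => integrableOn_cvde_cell hp (hKint p).integrableOn),
    Finset.sum_congr rfl hcell, Finset.sum_const, nsmul_eq_mul, mul_one_div,
    div_self (by exact_mod_cast hP.card_pos.ne')]

/-- the CVDE is a probability density (`∫ f = 1`) and gives each Voronoi
cell mass exactly `1/|P|`. -/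
theorem cvde_integral_one_and_cells_equally_likely {n : ℕ}
    (P : Finset (EuclideanSpace ℝ (Fin n))) (hP : P.Nonempty)
    (K : EuclideanSpace ℝ (Fin n) → EuclideanSpace ℝ (Fin n) → ℝ)
    (hK0 : ∀ p x, 0 ≤ K p x)
    (hKmeas : Measurable fun q : EuclideanSpace ℝ (Fin n) × EuclideanSpace ℝ (Fin n) =>
      K q.1 q.2)
    (hKint : ∀ p, Integrable (K p) volume)
    (hvolpos : ∀ p ∈ P, 0 < ∫ y in cell P p, K p y) :
    (∫ x, cvde P K x = 1) ∧
    ∀ p ∈ P, (∫ x in cell P p, cvde P K x) = 1 / P.card :=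
  cvde_integral_one_and_cells_equally_likely_general P hP K hKint hvolpos
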